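/- arXiv:1307.6876 — 2 statements merged into one kernel-verified Lean document; each statement's English description precedes it below -/
import Mathlib

section
/- Suppose lim_{j→∞} p_j = 1. Then there exist a real number r > 0 and an integer j_0 ≥ 1 (one may take r = √2 − 1 and any j_0 with p_j ≥ 2(√2 − 1) for all j ≥ j_0) such that for every j ≥ j_0, every λ ∈ ℂ with |ι_λ(j)| < r is an eigenvalue of the transition operator S acting on c_0. In particular, the point spectrum of S on c_0 has nonempty interior. -/
open Filter Finset
open scoped ENNReal Topology ZeroAtInfty

/-!
The eigenvector is `v_λ(n) = ∏_{j ≥ 1} ι_λ(j) ^ a_j(n)`. Row `n` of `S` only reaches `n + 1` and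
the numbers `n + 1 - q_r` with `r < ζ_n`, whose digits agree with those of `n` from `ζ_n` on, so
`(S v_λ)(n) = λ v_λ(n)` reduces to a telescoping identity driven by
`p_{j+1} ι_λ(j+1) + (1 - p_{j+1}) = ι_λ(j) ^ d_j`.

Read as `ι_λ(j+1) = (ι_λ(j) ^ d_j - (1 - p_{j+1})) / p_{j+1}`, this recursion keeps `‖ι_λ‖ < r`
once the `p_j` are close to `1`, and then forces `ι_λ(j) → 0` because `p_j → 1`. Since `v_λ(n)` is
at most a constant times `‖ι_λ‖` at the leading digit of `n`, whose index tends to infinity,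
`v_λ ∈ c₀`. The eigenvalues found this way form the open set `{λ : ‖ι_λ(j₀)‖ < r}`, which contains
every root of `ftil_{j₀-1} = 1 - p_{j₀}`.
-/

noncomputable section

namespace AMFC

/-- `q d j = d 0 * d 1 * ... * d j`. -/
def q (d : ℕ → ℕ) (j : ℕ) : ℕ := ∏ i ∈ Finset.range (j + 1), d i

/-- For `j ≥ 1`, `digit d n j = ⌊n / q_{j-1}⌋ mod d_j` is the `j`-th digit of `n`
in the Cantor system of numeration. -/
def digit (d : ℕ → ℕ) (n j : ℕ) : ℕ := (n / q d (j - 1)) % d j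

/-- The counter `ζ_n = min { j ≥ 1 : a_j(n) ≠ d_j - 1 }`. -/
def zeta (d : ℕ → ℕ) (n : ℕ) : ℕ := sInf {j | 1 ≤ j ∧ digit d n j ≠ d j - 1}

open scoped Classical in
/-- The transition probabilities of the stochastic adding machine. -/
def s (d : ℕ → ℕ) (p : ℕ → ℝ) (n m : ℕ) : ℝ :=
  if m = n + 1 then ∏ j ∈ Finset.Icc 1 (zeta d n), p j
  else if m = n then 1 - p 1
  else if h : ∃ r, 1 ≤ r ∧ r + 1 ≤ zeta d n ∧
      n = m + ∑ j ∈ Finset.Icc 1 r, (d j - 1) * q d (j - 1)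
    then (1 - p (h.choose + 1)) * ∏ j ∈ Finset.Icc 1 h.choose, p j
  else 0

/-- `f j (z) = ((z - (1 - p j)) / p j) ^ (d j)`. -/
def f (d : ℕ → ℕ) (p : ℕ → ℝ) (j : ℕ) (z : ℂ) : ℂ :=
  ((z - (1 - (p j : ℂ))) / (p j : ℂ)) ^ d j

/-- `ftil j = f j ∘ ... ∘ f 1`, with `ftil 0 = id`. -/
def ftil (d : ℕ → ℕ) (p : ℕ → ℝ) : ℕ → ℂ → ℂ
  | 0 => id
  | j + 1 => f d p (j + 1) ∘ ftil d p j

/-- The fibered filled Julia set `E = {z : limsup_j |ftil j z| < ∞}`. -/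
def E (d : ℕ → ℕ) (p : ℕ → ℝ) : Set ℂ :=
  {z | Filter.limsup (fun j => (‖ftil d p j z‖₊ : ℝ≥0∞)) Filter.atTop < ⊤}

/-- `ι_λ(r) = (ftil (r-1) λ - (1 - p r)) / p r` for `r ≥ 1`. -/
def iota (d : ℕ → ℕ) (p : ℕ → ℝ) (lam : ℂ) (r : ℕ) : ℂ :=
  (ftil d p (r - 1) lam - (1 - (p r : ℂ))) / (p r : ℂ)

/-- `v_λ(n) = ∏_{r ≥ 1} ι_λ(r) ^ a_r(n)`, a finite product. -/
def vlam (d : ℕ → ℕ) (p : ℕ → ℝ) (lam : ℂ) (n : ℕ) : ℂ :=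
  ∏ᶠ r : ℕ, iota d p lam (r + 1) ^ digit d n (r + 1)

/-- The point spectrum of a continuous linear operator. -/
def pointSpectrum {M : Type*} [NormedAddCommGroup M] [NormedSpace ℂ M]
    (T : M →L[ℂ] M) : Set ℂ :=
  {lam | ∃ v, v ≠ 0 ∧ T v = lam • v}

/-- The residual spectrum: `T - λI` is injective but its range is not dense. -/
def residualSpectrum {M : Type*} [NormedAddCommGroup M] [NormedSpace ℂ M]
    (T : M →L[ℂ] M) : Set ℂ :=
  {lam | Function.Injective ⇑(T - lam • (1 : M →L[ℂ] M)) ∧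
    ¬ DenseRange ⇑(T - lam • (1 : M →L[ℂ] M))}

/-- The continuous spectrum: `T - λI` is injective with dense range, but not surjective. -/
def continuousSpectrum {M : Type*} [NormedAddCommGroup M] [NormedSpace ℂ M]
    (T : M →L[ℂ] M) : Set ℂ :=
  {lam | Function.Injective ⇑(T - lam • (1 : M →L[ℂ] M)) ∧
    DenseRange ⇑(T - lam • (1 : M →L[ℂ] M)) ∧
    Set.range ⇑(T - lam • (1 : M →L[ℂ] M)) ≠ Set.univ}

structure IsCantorBase (d : ℕ → ℕ) : Prop where
  zero : d 0 = 1
  two_le : ∀ j, 1 ≤ j → 2 ≤ d j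

section Digits

variable {d : ℕ → ℕ} {n m r j k : ℕ}

lemma q_succ (d : ℕ → ℕ) (j : ℕ) : q d (j + 1) = q d j * d (j + 1) :=
  prod_range_succ _ _

lemma q_dvd_q_of_le {i j : ℕ} (h : i ≤ j) : q d i ∣ q d j :=
  prod_dvd_prod_of_subset _ _ _ (range_subset_range.2 (by omega))

lemma digit_eq_zero_of_lt_q (h : n < q d (j - 1)) : digit d n j = 0 := by
  simp [digit, Nat.div_eq_of_lt h]

lemma digit_eq_of_div_q_eq (hkj : k < j) (h : m / q d k = n / q d k) :
    digit d m j = digit d n j := by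
  obtain ⟨c, hc⟩ := q_dvd_q_of_le (d := d) (show k ≤ j - 1 by omega)
  simp only [digit, hc, ← Nat.div_div_eq_div_mul, h]

lemma digit_of_lt_zeta (hj : 1 ≤ j) (hjz : j < zeta d n) : digit d n j = d j - 1 := by
  by_contra h
  exact Nat.notMem_of_lt_sInf hjz ⟨hj, h⟩

namespace IsCantorBase

variable (hd : IsCantorBase d)
include hd

lemma pos (i : ℕ) : 0 < d i := by
  rcases i with _ | i
  · simp [hd.zero]
  · have := hd.two_le (i + 1) (by omega); omega

lemma q_zero : q d 0 = 1 := by simp [q, hd.zero]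

lemma q_pos (j : ℕ) : 0 < q d j := prod_pos fun i _ => hd.pos i

lemma q_strictMono : StrictMono (q d) := strictMono_nat_of_lt_succ fun j => by
  rw [q_succ]
  exact lt_mul_of_one_lt_right (hd.q_pos j) (hd.two_le (j + 1) (by omega))

lemma lt_q_self (n : ℕ) : n < q d n := by
  induction n with
  | zero => simp [hd.q_zero]
  | succ n ih => have := hd.q_strictMono (lt_add_one n); omega

lemma digit_eq_zero_of_lt (h : n < j) : digit d n j = 0 :=
  digit_eq_zero_of_lt_q <| (hd.lt_q_self n).trans_le <| hd.q_strictMono.monotone (by omega)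

lemma digit_lt (n j : ℕ) : digit d n j < d j := Nat.mod_lt _ (hd.pos j)

lemma digit_eq_zero_of_q_dvd (hj : 1 ≤ j) (hjk : j ≤ k) (h : q d k ∣ m) : digit d m j = 0 := by
  obtain ⟨c, hc⟩ := (q_dvd_q_of_le hjk).trans h
  obtain ⟨i, rfl⟩ : ∃ i, j = i + 1 := ⟨j - 1, by omega⟩
  rw [digit, Nat.add_sub_cancel, hc, q_succ, mul_assoc,
    Nat.mul_div_cancel_left _ (hd.q_pos _), Nat.mul_mod_right]

lemma sum_Icc_mul_q (r : ℕ) : ∑ j ∈ Icc 1 r, (d j - 1) * q d (j - 1) = q d r - 1 := by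
  induction r with
  | zero => simp [hd.q_zero]
  | succ r ih =>
    rw [sum_Icc_succ_top (by omega), ih, Nat.add_sub_cancel, q_succ, Nat.sub_one_mul]
    have := hd.q_pos r
    have := Nat.le_mul_of_pos_right (q d r) (hd.pos (r + 1))
    rw [mul_comm (d _)]
    omega

lemma digit_succ_self_ne (n : ℕ) : digit d n (n + 1) ≠ d (n + 1) - 1 := by
  rw [hd.digit_eq_zero_of_lt (lt_add_one n)]
  have := hd.two_le (n + 1) (by omega)
  omega

lemma zeta_mem (n : ℕ) : zeta d n ∈ {j | 1 ≤ j ∧ digit d n j ≠ d j - 1} :=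
  Nat.sInf_mem ⟨n + 1, by omega, hd.digit_succ_self_ne n⟩

lemma one_le_zeta (n : ℕ) : 1 ≤ zeta d n := (hd.zeta_mem n).1

lemma zeta_le (n : ℕ) : zeta d n ≤ n + 1 :=
  Nat.sInf_le (m := n + 1) ⟨by omega, hd.digit_succ_self_ne n⟩

lemma digit_zeta_add_one_lt (n : ℕ) : digit d n (zeta d n) + 1 < d (zeta d n) := by
  have := hd.digit_lt n (zeta d n)
  have := (hd.zeta_mem n).2
  omega

lemma mod_q_of_lt_zeta (hr : r < zeta d n) : n % q d r = q d r - 1 := by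
  induction r with
  | zero => simp [hd.q_zero, Nat.mod_one]
  | succ r ih =>
    rw [q_succ, Nat.mod_mul, ih (by omega)]
    change q d r - 1 + q d r * digit d n (r + 1) = _
    rw [digit_of_lt_zeta (by omega) hr, Nat.mul_sub_one]
    have := hd.q_pos r
    have := Nat.le_mul_of_pos_right (q d r) (hd.pos (r + 1))
    omega

lemma succ_eq_q_mul (hr : r < zeta d n) : n + 1 = q d r * (n / q d r + 1) := by
  have := Nat.div_add_mod n (q d r)
  have := hd.q_pos r
  rw [hd.mod_q_of_lt_zeta hr] at *
  rw [Nat.mul_succ]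
  omega

lemma succ_sub_q_eq (hr : r < zeta d n) : n + 1 - q d r = q d r * (n / q d r) := by
  rw [hd.succ_eq_q_mul hr, Nat.mul_succ, Nat.add_sub_cancel]

lemma digit_succ_sub_q_of_le (hr : r < zeta d n) (hj : 1 ≤ j) (hjr : j ≤ r) :
    digit d (n + 1 - q d r) j = 0 :=
  hd.digit_eq_zero_of_q_dvd hj hjr ⟨_, hd.succ_sub_q_eq hr⟩

lemma digit_succ_sub_q_of_lt (hr : r < zeta d n) (hrj : r < j) :
    digit d (n + 1 - q d r) j = digit d n j :=
  digit_eq_of_div_q_eq hrj <| by rw [hd.succ_sub_q_eq hr, Nat.mul_div_cancel_left _ (hd.q_pos r)]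

lemma digit_succ_of_lt_zeta (hj : 1 ≤ j) (hjz : j < zeta d n) : digit d (n + 1) j = 0 :=
  hd.digit_eq_zero_of_q_dvd hj (show j ≤ zeta d n - 1 by omega)
    ⟨_, hd.succ_eq_q_mul (show zeta d n - 1 < zeta d n by omega)⟩

lemma succ_div_q_zeta_sub_one (n : ℕ) :
    (n + 1) / q d (zeta d n - 1) = n / q d (zeta d n - 1) + 1 := by
  conv_lhs => rw [hd.succ_eq_q_mul (show zeta d n - 1 < zeta d n by have := hd.one_le_zeta n; omega)]
  exact Nat.mul_div_cancel_left _ (hd.q_pos _)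

lemma digit_succ_zeta (n : ℕ) : digit d (n + 1) (zeta d n) = digit d n (zeta d n) + 1 := by
  have h := hd.digit_zeta_add_one_lt n
  rw [digit, hd.succ_div_q_zeta_sub_one, Nat.add_mod_of_add_mod_lt (by rwa [Nat.one_mod_eq_one.2 (by omega)]),
    Nat.one_mod_eq_one.2 (by omega)]
  rfl

lemma digit_succ_of_zeta_lt (hj : zeta d n < j) : digit d (n + 1) j = digit d n j := by
  have hz := hd.one_le_zeta n
  refine digit_eq_of_div_q_eq hj ?_
  rw [← Nat.sub_add_cancel hz, q_succ, ← Nat.div_div_eq_div_mul, ← Nat.div_div_eq_div_mul,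
    Nat.sub_add_cancel hz, hd.succ_div_q_zeta_sub_one, Nat.succ_div_of_not_dvd]
  have := hd.digit_succ_zeta n
  rw [digit, hd.succ_div_q_zeta_sub_one] at this
  rw [Nat.dvd_iff_mod_eq_zero, this]
  exact Nat.add_one_ne_zero _

end IsCantorBase

end Digits

def numDigits (d : ℕ → ℕ) (n : ℕ) : ℕ := sInf {K | n < q d K}

namespace IsCantorBase

variable {d : ℕ → ℕ} (hd : IsCantorBase d)
include hd

lemma lt_q_numDigits (n : ℕ) : n < q d (numDigits d n) := Nat.sInf_mem (s := {K | n < q d K}) ⟨n, hd.lt_q_self n⟩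

lemma lt_numDigits_of_q_le {K n : ℕ} (h : q d K ≤ n) : K < numDigits d n := by
  by_contra hK
  have := hd.q_strictMono.monotone (not_lt.1 hK)
  have := hd.lt_q_numDigits n
  omega

lemma tendsto_numDigits : Tendsto (numDigits d) atTop atTop :=
  tendsto_atTop_atTop.2 fun K => ⟨q d K, fun _ hn => (hd.lt_numDigits_of_q_le hn).le⟩

lemma digit_eq_zero_of_numDigits_lt {n j : ℕ} (h : numDigits d n < j) : digit d n j = 0 :=
  digit_eq_zero_of_lt_q ((hd.lt_q_numDigits n).trans_le (hd.q_strictMono.monotone (by omega)))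

lemma digit_numDigits_ne_zero {n : ℕ} (h : numDigits d n ≠ 0) :
    digit d n (numDigits d n) ≠ 0 := by
  set N := numDigits d n
  have hlow : q d (N - 1) ≤ n := not_lt.1 (Nat.notMem_of_lt_sInf (s := {K | n < q d K}) (show N - 1 < N by omega))
  have hhigh : n < q d (N - 1) * d N := by
    have := q_succ d (N - 1)
    rw [Nat.sub_add_cancel (by omega)] at this
    exact this ▸ hd.lt_q_numDigits n
  rw [digit, Nat.mod_eq_of_lt (Nat.div_lt_of_lt_mul hhigh)]
  exact (Nat.div_pos hlow (hd.q_pos _)).ne'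

end IsCantorBase

section TransitionMatrix

variable {d : ℕ → ℕ} {p : ℕ → ℝ} {n m r : ℕ}

lemma s_succ : s d p n (n + 1) = ∏ j ∈ Icc 1 (zeta d n), p j := if_pos rfl

namespace IsCantorBase

variable (hd : IsCantorBase d)
include hd

lemma q_le_succ (hr : r < zeta d n) : q d r ≤ n + 1 :=
  Nat.le_of_dvd n.succ_pos ⟨_, hd.succ_eq_q_mul hr⟩

/-- The `r = 0` case is the diagonal entry, since `n + 1 - q_0 = n`. -/
lemma s_succ_sub_q (hr : r < zeta d n) :
    s d p n (n + 1 - q d r) = (1 - p (r + 1)) * ∏ j ∈ Icc 1 r, p j := by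
  have hq := hd.q_le_succ hr
  rcases Nat.eq_zero_or_pos r with rfl | hr0
  · simp [s, hd.q_zero]
  have h2 : 1 < q d r := hd.q_zero ▸ hd.q_strictMono hr0
  have hex : ∃ r', 1 ≤ r' ∧ r' + 1 ≤ zeta d n ∧
      n = n + 1 - q d r + ∑ j ∈ Icc 1 r', (d j - 1) * q d (j - 1) :=
    ⟨r, hr0, hr, by rw [hd.sum_Icc_mul_q]; omega⟩
  have hchoose : hex.choose = r := by
    obtain ⟨-, -, h⟩ := hex.choose_spec
    rw [hd.sum_Icc_mul_q] at h
    have := hd.q_pos hex.choose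
    exact hd.q_strictMono.injective (by omega)
  rw [s, if_neg (by omega), if_neg (by omega), dif_pos hex, hchoose]

lemma s_eq_zero (h1 : m ≠ n + 1) (h2 : ∀ r < zeta d n, m ≠ n + 1 - q d r) : s d p n m = 0 := by
  have hn : m ≠ n := by simpa [hd.q_zero] using h2 0 (hd.one_le_zeta n)
  rw [s, if_neg h1, if_neg hn, dif_neg]
  rintro ⟨r, -, hr, h⟩
  rw [hd.sum_Icc_mul_q] at h
  have := hd.q_pos r
  exact h2 r (by omega) (by omega)

lemma tsum_s_mul (w : ℕ → ℂ) (n : ℕ) :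
    ∑' m, (s d p n m : ℂ) * w m = (∏ j ∈ Icc 1 (zeta d n), (p j : ℂ)) * w (n + 1)
      + ∑ r ∈ range (zeta d n),
          (1 - (p (r + 1) : ℂ)) * (∏ j ∈ Icc 1 r, (p j : ℂ)) * w (n + 1 - q d r) := by
  classical
  have hinj : Set.InjOn (fun r => n + 1 - q d r) (range (zeta d n)) := by
    intro a ha b hb hab
    have := hd.q_le_succ (mem_range.1 ha)
    have := hd.q_le_succ (mem_range.1 hb)
    exact hd.q_strictMono.injective (by simp only at hab; omega)
  have hnot : n + 1 ∉ (range (zeta d n)).image fun r => n + 1 - q d r := by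
    simp only [mem_image, not_exists, not_and]
    intro r _
    have := hd.q_pos r
    omega
  rw [tsum_eq_sum (s := insert (n + 1) ((range (zeta d n)).image fun r => n + 1 - q d r)),
    sum_insert hnot, sum_image hinj, s_succ]
  · push_cast
    congr 1
    refine sum_congr rfl fun r hr => ?_
    rw [hd.s_succ_sub_q (mem_range.1 hr)]
    push_cast
    ring
  · intro m hm
    simp only [mem_insert, mem_image, mem_range, not_or, not_exists, not_and] at hm
    rw [hd.s_eq_zero hm.1 fun r hr h => hm.2 r hr h.symm]
    simp

end IsCantorBase

end TransitionMatrix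

lemma prod_mul_add_sum_eq_mul_prod {R : Type*} [CommRing R] {p x : ℕ → R} {e : ℕ → ℕ} {lam : R}
    (hlam : p 1 * x 1 + (1 - p 1) = lam)
    (hrec : ∀ j, 1 ≤ j → p (j + 1) * x (j + 1) + (1 - p (j + 1)) = x j ^ e j)
    (he : ∀ j, 1 ≤ j → 1 ≤ e j) {z : ℕ} (hz : 1 ≤ z) :
    (∏ j ∈ Icc 1 z, p j) * x z
        + ∑ r ∈ range z, (1 - p (r + 1)) * (∏ j ∈ Icc 1 r, p j) *
            ∏ j ∈ Ico (r + 1) z, x j ^ (e j - 1)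
      = lam * ∏ j ∈ Ico 1 z, x j ^ (e j - 1) := by
  induction z, hz using Nat.le_induction with
  | base => simpa using hlam
  | succ z hz ih =>
    have hx : x z ^ e z = x z * x z ^ (e z - 1) := by
      rw [← pow_succ', Nat.sub_add_cancel (he z hz)]
    have hQ : ∀ r ∈ range z,
        (1 - p (r + 1)) * (∏ j ∈ Icc 1 r, p j) * ∏ j ∈ Ico (r + 1) (z + 1), x j ^ (e j - 1)
          = (1 - p (r + 1)) * (∏ j ∈ Icc 1 r, p j) * (∏ j ∈ Ico (r + 1) z, x j ^ (e j - 1))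
            * x z ^ (e z - 1) := fun r hr => by
      rw [prod_Ico_succ_top (by simp at hr; omega)]
      ring
    rw [sum_range_succ, sum_congr rfl hQ, ← sum_mul, prod_Icc_succ_top (by omega), Ico_self,
      prod_empty, prod_Ico_succ_top hz]
    linear_combination x z ^ (e z - 1) * ih + (∏ j ∈ Icc 1 z, p j) * (hrec z hz).trans hx

section Eigenvector

variable {d : ℕ → ℕ} {p : ℕ → ℝ} (lam : ℂ)

lemma vlam_eq_prod_Ico {m M : ℕ} (hM : ∀ j, M ≤ j → digit d m j = 0) :
    vlam d p lam m = ∏ j ∈ Ico 1 M, iota d p lam j ^ digit d m j := by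
  have hsupp : Function.mulSupport (fun r => iota d p lam (r + 1) ^ digit d m (r + 1))
      ⊆ ((Ico 1 M).image (· - 1) : Finset ℕ) := by
    intro r hr
    have : r + 1 < M := by
      by_contra h
      exact hr (by simp [hM (r + 1) (by omega)])
    exact mem_image.2 ⟨r + 1, mem_Ico.2 ⟨by omega, this⟩, rfl⟩
  rw [vlam, finprod_eq_prod_of_mulSupport_subset _ hsupp,
    prod_image fun a ha b hb h => by simp only [coe_Ico, Set.mem_Ico] at ha hb h; omega]
  exact prod_congr rfl fun j hj => by rw [Nat.sub_add_cancel (mem_Ico.1 hj).1]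

lemma vlam_zero : vlam d p lam 0 = 1 := by simp [vlam, digit]

lemma p_mul_iota_add {r : ℕ} (hr : p r ≠ 0) :
    (p r : ℂ) * iota d p lam r + (1 - p r) = ftil d p (r - 1) lam := by
  have : (p r : ℂ) ≠ 0 := Complex.ofReal_ne_zero.2 hr
  rw [iota]
  field_simp
  ring

lemma p_succ_mul_iota_succ_add {j : ℕ} (hj : 1 ≤ j) (hp : p (j + 1) ≠ 0) :
    (p (j + 1) : ℂ) * iota d p lam (j + 1) + (1 - p (j + 1)) = iota d p lam j ^ d j := by
  obtain ⟨k, rfl⟩ : ∃ k, j = k + 1 := ⟨j - 1, by omega⟩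
  exact p_mul_iota_add lam hp

namespace IsCantorBase

variable (hd : IsCantorBase d)
include hd

lemma vlam_succ_sub_q {n r M : ℕ} (hr : r < zeta d n) (hzM : zeta d n < M)
    (hM : ∀ j, M ≤ j → digit d n j = 0) :
    vlam d p lam (n + 1 - q d r)
      = (∏ j ∈ Ico (r + 1) (zeta d n), iota d p lam j ^ (d j - 1))
        * ∏ j ∈ Ico (zeta d n) M, iota d p lam j ^ digit d n j := by
  rw [vlam_eq_prod_Ico lam (M := M) fun j hj => by
      rw [hd.digit_succ_sub_q_of_lt hr (by omega), hM j hj],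
    ← prod_Ico_consecutive _ (show 1 ≤ r + 1 by omega) (show r + 1 ≤ M by omega),
    ← prod_Ico_consecutive _ (show r + 1 ≤ zeta d n by omega) hzM.le,
    prod_eq_one fun j hj => by
      rw [hd.digit_succ_sub_q_of_le hr (mem_Ico.1 hj).1 (Nat.lt_succ_iff.1 (mem_Ico.1 hj).2),
        pow_zero],
    one_mul]
  congr 1
  · refine prod_congr rfl fun j hj => ?_
    obtain ⟨h1, h2⟩ := mem_Ico.1 hj
    rw [hd.digit_succ_sub_q_of_lt hr h1, digit_of_lt_zeta (by omega) h2]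
  · exact prod_congr rfl fun j hj => by
      rw [hd.digit_succ_sub_q_of_lt hr (by have := (mem_Ico.1 hj).1; omega)]

lemma vlam_succ {n M : ℕ} (hzM : zeta d n < M) (hM : ∀ j, M ≤ j → digit d n j = 0) :
    vlam d p lam (n + 1)
      = iota d p lam (zeta d n) * ∏ j ∈ Ico (zeta d n) M, iota d p lam j ^ digit d n j := by
  rw [vlam_eq_prod_Ico lam (M := M) fun j hj => by
      rw [hd.digit_succ_of_zeta_lt (by omega), hM j hj],
    ← prod_Ico_consecutive _ (hd.one_le_zeta n) hzM.le,
    prod_eq_one fun j hj => by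
      rw [hd.digit_succ_of_lt_zeta (mem_Ico.1 hj).1 (mem_Ico.1 hj).2, pow_zero],
    one_mul, prod_eq_prod_Ico_succ_bot hzM, prod_eq_prod_Ico_succ_bot hzM, hd.digit_succ_zeta,
    pow_succ', mul_assoc,
    prod_congr rfl fun j hj => by rw [hd.digit_succ_of_zeta_lt (mem_Ico.1 hj).1]]

lemma tsum_s_mul_vlam (hp : ∀ j, 1 ≤ j → p j ≠ 0) (n : ℕ) :
    ∑' m, (s d p n m : ℂ) * vlam d p lam m = lam * vlam d p lam n := by
  have hzM : zeta d n < n + 2 := by have := hd.zeta_le n; omega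
  have hM : ∀ j, n + 2 ≤ j → digit d n j = 0 := fun j hj => hd.digit_eq_zero_of_lt (by omega)
  set T := ∏ j ∈ Ico (zeta d n) (n + 2), iota d p lam j ^ digit d n j
  have hn : vlam d p lam n = (∏ j ∈ Ico 1 (zeta d n), iota d p lam j ^ (d j - 1)) * T := by
    simpa [hd.q_zero] using hd.vlam_succ_sub_q lam (hd.one_le_zeta n) hzM hM
  have key := prod_mul_add_sum_eq_mul_prod (p := fun j => (p j : ℂ)) (x := iota d p lam) (lam := lam)
    (p_mul_iota_add lam (hp 1 le_rfl)) (fun j hj => p_succ_mul_iota_succ_add lam hj (hp _ (by omega)))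
    (fun j hj => by have := hd.two_le j hj; omega) (hd.one_le_zeta n)
  rw [hd.tsum_s_mul, hd.vlam_succ lam hzM hM, hn,
    sum_congr rfl fun r hr => by rw [hd.vlam_succ_sub_q lam (mem_range.1 hr) hzM hM]]
  simp_rw [← mul_assoc, ← sum_mul]
  linear_combination T * key

end IsCantorBase

end Eigenvector

lemma tendsto_zero_of_le_mul_add {x e : ℕ → ℝ} {c : ℝ} (hx : ∀ k, 0 ≤ x k) (hc0 : 0 ≤ c)
    (hc1 : c < 1) (he : Tendsto e atTop (𝓝 0)) (hrec : ∀ᶠ k in atTop, x (k + 1) ≤ c * x k + e k) :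
    Tendsto x atTop (𝓝 0) := by
  refine tendsto_order.2 ⟨fun a ha => Eventually.of_forall fun k => ha.trans_le (hx k),
    fun a ha => ?_⟩
  have hε : 0 < a / 2 := half_pos ha
  obtain ⟨K, hK⟩ := eventually_atTop.1
    (hrec.and (he.eventually (Iic_mem_nhds (mul_pos (sub_pos.2 hc1) hε))))
  -- once `e ≤ (1 - c) a / 2`, the excess of `x` over `a / 2` contracts by the factor `c`
  set y : ℕ → ℝ := fun i => max (x (K + i) - a / 2) 0
  have hy : ∀ i, y i ≤ c ^ i * y 0 := fun i => le_geom hc0 i fun k _ => by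
    obtain ⟨h1, h2⟩ := hK (K + k) le_self_add
    have := mul_le_mul_of_nonneg_left (le_max_left (x (K + k) - a / 2) 0) hc0
    exact max_le (by rw [← add_assoc]; linarith) (by positivity)
  obtain ⟨N, hN⟩ := eventually_atTop.1
    (((tendsto_pow_atTop_nhds_zero_of_lt_one hc0 hc1).mul_const (y 0)).eventually
      (gt_mem_nhds (show 0 * y 0 < a / 2 by simpa using hε)))
  refine eventually_atTop.2 ⟨K + N, fun k hk => ?_⟩
  obtain ⟨i, rfl⟩ := Nat.exists_eq_add_of_le (le_self_add.trans hk)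
  have : x (K + i) - a / 2 < a / 2 :=
    (le_max_left _ 0).trans_lt ((hy i).trans_lt (hN i (by omega)))
  linarith

section Decay

variable {d : ℕ → ℕ} {p : ℕ → ℝ} (lam : ℂ)

lemma norm_iota_succ_le {j : ℕ} (hj : 1 ≤ j) (hp : p (j + 1) ∈ Set.Ioc (0 : ℝ) 1) :
    p (j + 1) * ‖iota d p lam (j + 1)‖ ≤ ‖iota d p lam j‖ ^ d j + (1 - p (j + 1)) := by
  have h : (p (j + 1) : ℂ) * iota d p lam (j + 1)
      = iota d p lam j ^ d j - ((1 - p (j + 1) : ℝ) : ℂ) := by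
    push_cast
    linear_combination p_succ_mul_iota_succ_add lam hj hp.1.ne'
  calc p (j + 1) * ‖iota d p lam (j + 1)‖ = ‖(p (j + 1) : ℂ) * iota d p lam (j + 1)‖ := by
        rw [norm_mul, Complex.norm_real, Real.norm_of_nonneg hp.1.le]
    _ ≤ ‖iota d p lam j‖ ^ d j + (1 - p (j + 1)) := by
        rw [h]
        refine (norm_sub_le _ _).trans_eq ?_
        rw [norm_pow, Complex.norm_real, Real.norm_of_nonneg (sub_nonneg.2 hp.2)]

/-- The condition `r ^ 2 + 1 ≤ p_k (1 + r)` is what keeps the disc `‖ι‖ < r` invariant under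
`ι_{k+1} = (ι_k ^ d_k - (1 - p_{k+1})) / p_{k+1}`. -/
lemma norm_iota_lt (hd : IsCantorBase d) (hp : ∀ j, 1 ≤ j → p j ∈ Set.Ioc (0 : ℝ) 1) {r : ℝ}
    (hr : r ≤ 1) {j0 : ℕ} (hj0 : 1 ≤ j0) (hpr : ∀ k, j0 < k → r ^ 2 + 1 ≤ p k * (1 + r))
    (hlam : ‖iota d p lam j0‖ < r) {k : ℕ} (hk : j0 ≤ k) : ‖iota d p lam k‖ < r := by
  induction k, hk using Nat.le_induction with
  | base => exact hlam
  | succ k hk ih =>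
    have hrec := norm_iota_succ_le (d := d) lam (hj0.trans hk) (hp (k + 1) (by omega))
    have hpow : ‖iota d p lam k‖ ^ d k ≤ ‖iota d p lam k‖ ^ 2 :=
      pow_le_pow_of_le_one (norm_nonneg _) (ih.le.trans hr) (hd.two_le k (by omega))
    have := hpr (k + 1) (by omega)
    have hp0 := (hp (k + 1) (by omega)).1
    nlinarith [norm_nonneg (iota d p lam k), norm_nonneg (iota d p lam (k + 1))]

lemma tendsto_norm_iota (hd : IsCantorBase d) (hp : ∀ j, 1 ≤ j → p j ∈ Set.Ioc (0 : ℝ) 1)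
    (hp1 : Tendsto p atTop (𝓝 1)) {r : ℝ} (hr : r < 1) {j0 : ℕ} (hj0 : 1 ≤ j0)
    (hpr : ∀ k, j0 < k → r ^ 2 + 1 ≤ p k * (1 + r)) (hlam : ‖iota d p lam j0‖ < r) :
    Tendsto (fun j => ‖iota d p lam j‖) atTop (𝓝 0) := by
  have hr0 : 0 ≤ r := (norm_nonneg _).trans hlam.le
  refine tendsto_zero_of_le_mul_add (c := r * (1 + r) / (r ^ 2 + 1))
    (e := fun k => (1 - p (k + 1)) / p (k + 1)) (fun _ => norm_nonneg _) (by positivity)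
    ((div_lt_one (by positivity)).2 (by nlinarith)) ?_ ?_
  · have h : Tendsto (fun k => p (k + 1)) atTop (𝓝 1) := hp1.comp (tendsto_add_atTop_nat 1)
    have := (h.const_sub 1).div h one_ne_zero
    rwa [sub_self, zero_div] at this
  · filter_upwards [eventually_ge_atTop j0] with k hk
    set x := ‖iota d p lam k‖
    have hx : x < r := norm_iota_lt lam hd hp hr.le hj0 hpr hlam hk
    have hp0 := (hp (k + 1) (by omega)).1
    have hrec := norm_iota_succ_le (d := d) lam (hj0.trans hk) (hp (k + 1) (by omega))
    have hpow : x ^ d k ≤ r * x :=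
      (pow_le_pow_of_le_one (norm_nonneg _) (hx.le.trans hr.le) (hd.two_le k (by omega))).trans
        (by nlinarith [norm_nonneg (iota d p lam k)])
    have hc : r / p (k + 1) ≤ r * (1 + r) / (r ^ 2 + 1) := by
      rw [div_le_div_iff₀ hp0 (by positivity)]
      nlinarith [mul_le_mul_of_nonneg_left (hpr (k + 1) (by omega)) hr0]
    calc ‖iota d p lam (k + 1)‖ ≤ (r * x + (1 - p (k + 1))) / p (k + 1) := by
          rw [le_div_iff₀ hp0]
          linarith
      _ = r / p (k + 1) * x + (1 - p (k + 1)) / p (k + 1) := by ring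
      _ ≤ _ := by gcongr

lemma norm_vlam_le (hd : IsCantorBase d) {j0 n : ℕ}
    (hsmall : ∀ j, j0 < j → ‖iota d p lam j‖ ≤ 1) (hn : j0 < numDigits d n) :
    ‖vlam d p lam n‖ ≤ (∏ j ∈ Ico 1 (j0 + 1), max 1 ‖iota d p lam j‖ ^ d j)
      * ‖iota d p lam (numDigits d n)‖ := by
  set N := numDigits d n
  rw [vlam_eq_prod_Ico lam (M := N + 1) fun j hj => hd.digit_eq_zero_of_numDigits_lt hj,
    ← prod_Ico_consecutive _ (show 1 ≤ j0 + 1 by omega) (show j0 + 1 ≤ N + 1 by omega),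
    prod_Ico_succ_top (show j0 + 1 ≤ N by omega)]
  simp only [norm_mul, norm_prod, norm_pow]
  have h1 : ∏ j ∈ Ico 1 (j0 + 1), ‖iota d p lam j‖ ^ digit d n j
      ≤ ∏ j ∈ Ico 1 (j0 + 1), max 1 ‖iota d p lam j‖ ^ d j :=
    prod_le_prod (fun _ _ => by positivity) fun j _ =>
      (pow_le_pow_left₀ (norm_nonneg _) (le_max_right _ _) _).trans
        (pow_le_pow_right₀ (le_max_left _ _) (hd.digit_lt n j).le)
  have h2 : ∏ j ∈ Ico (j0 + 1) N, ‖iota d p lam j‖ ^ digit d n j ≤ 1 :=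
    prod_le_one (fun _ _ => by positivity) fun j hj =>
      pow_le_one₀ (norm_nonneg _) (hsmall j (mem_Ico.1 hj).1)
  have h3 : ‖iota d p lam N‖ ^ digit d n N ≤ ‖iota d p lam N‖ :=
    pow_le_of_le_one (norm_nonneg _) (hsmall N hn) (hd.digit_numDigits_ne_zero (by omega))
  calc _ ≤ (∏ j ∈ Ico 1 (j0 + 1), max 1 ‖iota d p lam j‖ ^ d j) * (1 * ‖iota d p lam N‖) := by
        gcongr
    _ = _ := by rw [one_mul]

lemma tendsto_vlam (hd : IsCantorBase d) (hp : ∀ j, 1 ≤ j → p j ∈ Set.Ioc (0 : ℝ) 1)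
    (hp1 : Tendsto p atTop (𝓝 1)) {r : ℝ} (hr : r < 1) {j0 : ℕ} (hj0 : 1 ≤ j0)
    (hpr : ∀ k, j0 < k → r ^ 2 + 1 ≤ p k * (1 + r)) (hlam : ‖iota d p lam j0‖ < r) :
    Tendsto (vlam d p lam) atTop (𝓝 0) := by
  have hsmall : ∀ j, j0 < j → ‖iota d p lam j‖ ≤ 1 := fun j hj =>
    (norm_iota_lt lam hd hp hr.le hj0 hpr hlam hj.le).le.trans hr.le
  refine squeeze_zero_norm' ?_ (by
    simpa using ((tendsto_norm_iota lam hd hp hp1 hr hj0 hpr hlam).comp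
      hd.tendsto_numDigits).const_mul (∏ j ∈ Ico 1 (j0 + 1), max 1 ‖iota d p lam j‖ ^ d j))
  filter_upwards [hd.tendsto_numDigits.eventually_gt_atTop j0] with n hn
    using norm_vlam_le lam hd hsmall hn

end Decay

section PointSpectrum

variable {d : ℕ → ℕ} {p : ℕ → ℝ}

lemma continuous_ftil (j : ℕ) : Continuous (ftil d p j) := by
  induction j with
  | zero => exact continuous_id
  | succ k ih => exact ((ih.sub continuous_const).div_const _).pow _

lemma continuous_iota (j : ℕ) : Continuous fun lam => iota d p lam j :=
  ((continuous_ftil _).sub continuous_const).div_const _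

lemma ftil_surjective (hd : IsCantorBase d) (hp : ∀ j, 1 ≤ j → p j ≠ 0) (j : ℕ) :
    Function.Surjective (ftil d p j) := by
  induction j with
  | zero => exact Function.surjective_id
  | succ k ih =>
    refine Function.Surjective.comp (fun w => ?_) ih
    obtain ⟨u, hu⟩ := IsAlgClosed.exists_pow_nat_eq w (hd.pos (k + 1))
    have : (p (k + 1) : ℂ) ≠ 0 := Complex.ofReal_ne_zero.2 (hp _ (by omega))
    refine ⟨p (k + 1) * u + (1 - p (k + 1)), ?_⟩
    rw [f, ← hu]
    congr 1
    field_simp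
    ring

lemma mem_pointSpectrum_of_tendsto_vlam (hd : IsCantorBase d) (hp : ∀ j, 1 ≤ j → p j ≠ 0)
    {lam : ℂ} {T : C₀(ℕ, ℂ) →L[ℂ] C₀(ℕ, ℂ)}
    (hT : ∀ (w : C₀(ℕ, ℂ)) (n : ℕ), T w n = ∑' m : ℕ, (s d p n m : ℂ) * w m)
    (h : Tendsto (vlam d p lam) atTop (𝓝 0)) : lam ∈ pointSpectrum T := by
  let v : C₀(ℕ, ℂ) := ⟨⟨vlam d p lam, continuous_of_discreteTopology⟩,
    by rwa [cocompact_eq_cofinite, Nat.cofinite_eq_atTop]⟩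
  refine ⟨v, fun hv => ?_, ?_⟩
  · simpa [v, vlam_zero] using congr($hv 0)
  · ext n
    simp [hT, v, hd.tsum_s_mul_vlam _ hp]

end PointSpectrum

/-- if `p_j → 1`, there are `r > 0` and `j₀ ≥ 1` such that for every
`j ≥ j₀`, every `λ` with `|ι_λ(j)| < r` is an eigenvalue of `S` on `c₀`; in
particular the point spectrum of `S` on `c₀` has nonempty interior. -/
theorem stmt12 (d : ℕ → ℕ) (p : ℕ → ℝ)
    (hd0 : d 0 = 1) (hd : ∀ j, 1 ≤ j → 2 ≤ d j)
    (hp : ∀ j, 1 ≤ j → p j ∈ Set.Ioc (0 : ℝ) 1)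
    (hp1 : Filter.Tendsto (fun j => p j) Filter.atTop (nhds (1 : ℝ)))
    (T0 : C₀(ℕ, ℂ) →L[ℂ] C₀(ℕ, ℂ))
    (hT0 : ∀ (w : C₀(ℕ, ℂ)) (n : ℕ), T0 w n = ∑' m : ℕ, (s d p n m : ℂ) * w m) :
    (∃ r : ℝ, 0 < r ∧ ∃ j0 : ℕ, 1 ≤ j0 ∧ ∀ j, j0 ≤ j →
        ∀ lam : ℂ, ‖iota d p lam j‖ < r → lam ∈ pointSpectrum T0) ∧
      (interior (pointSpectrum T0)).Nonempty := by
  have hd' : IsCantorBase d := ⟨hd0, hd⟩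
  have hp0 : ∀ j, 1 ≤ j → p j ≠ 0 := fun j hj => (hp j hj).1.ne'
  -- with `r = 1 / 2` the condition `r ^ 2 + 1 ≤ p_k (1 + r)` of `norm_iota_lt` reads `5 / 6 ≤ p_k`
  obtain ⟨j0, hj0⟩ := eventually_atTop.1
    ((hp1.eventually_const_le (show (5 / 6 : ℝ) < 1 by norm_num)).and (eventually_ge_atTop 1))
  have hmem : ∀ j, j0 ≤ j → ∀ lam : ℂ, ‖iota d p lam j‖ < 1 / 2 → lam ∈ pointSpectrum T0 :=
    fun j hj lam hlam => mem_pointSpectrum_of_tendsto_vlam hd' hp0 hT0 <|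
      tendsto_vlam lam hd' hp hp1 (by norm_num) (hj0 j hj).2
        (fun k hk => by nlinarith [(hj0 k (by omega)).1]) hlam
  refine ⟨⟨1 / 2, by norm_num, j0, (hj0 j0 le_rfl).2, hmem⟩, ?_⟩
  obtain ⟨lam0, hlam0⟩ := ftil_surjective hd' hp0 (j0 - 1) (1 - p j0)
  refine ⟨lam0, interior_maximal (t := {lam | ‖iota d p lam j0‖ < 1 / 2})
    (fun lam => hmem j0 le_rfl lam) (isOpen_lt (continuous_iota j0).norm continuous_const) ?_⟩
  simp [iota, hlam0]

end AMFC
end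
end

section
/- Suppose lim_{j→∞} p_j = 1 and p_i ≥ 2(√2 − 1) for all i ≥ 1. Then the fibered filled Julia set E is a connected subset of ℂ. -/
open Filter Finset
open scoped ENNReal Topology ZeroAtInfty

noncomputable section

section Topology

variable {X Y : Type*} [TopologicalSpace X] [TopologicalSpace Y]

theorem PreconnectedSpace.of_isOpenMap_of_isClosedMap [PreconnectedSpace Y] {g : X → Y}
    (hgo : IsOpenMap g) (hgc : IsClosedMap g) {y : Y} (hy : (g ⁻¹' {y}).Subsingleton) :
    PreconnectedSpace X := by
  have mem_image : ∀ C : Set X, IsClopen C → C.Nonempty → y ∈ g '' C := fun C hC hne =>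
    (IsClopen.eq_univ ⟨hgc C hC.isClosed, hgo C hC.isOpen⟩ (hne.image g)).symm ▸ Set.mem_univ y
  refine preconnectedSpace_iff_clopen.mpr fun C hC => ?_
  by_contra! h
  obtain ⟨a, ha, rfl⟩ := mem_image C hC h.1
  obtain ⟨b, hb, hba⟩ := mem_image Cᶜ hC.compl (Set.nonempty_compl.mpr h.2)
  exact hb (hy hba rfl ▸ ha)

theorem IsPreconnected.preimage_of_isOpenMap_of_isCompact [T2Space Y] {g : X → Y}
    (hgc : Continuous g) (hgo : IsOpenMap g) {S : Set Y} (hS : IsPreconnected S)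
    (hT : IsCompact (g ⁻¹' S)) {y : Y} (hyS : y ∈ S) (hy : (g ⁻¹' {y}).Subsingleton) :
    IsPreconnected (g ⁻¹' S) := by
  rw [isPreconnected_iff_preconnectedSpace] at hS ⊢
  have := isCompact_iff_compactSpace.mp hT
  refine PreconnectedSpace.of_isOpenMap_of_isClosedMap (hgo.restrictPreimage S)
    hgc.restrictPreimage.isClosedMap (y := ⟨y, hyS⟩) fun a ha b hb => ?_
  exact Subtype.ext (hy (congrArg Subtype.val ha) (congrArg Subtype.val hb))

theorem IsPreconnected.iInter_of_directed [T2Space X] {ι : Type*} [Nonempty ι] {K : ι → Set X}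
    (hdir : Directed (· ⊇ ·) K) (hK : ∀ i, IsCompact (K i))
    (hKc : ∀ i, IsPreconnected (K i)) : IsPreconnected (⋂ i, K i) := by
  have hcl : IsClosed (⋂ i, K i) := isClosed_iInter fun i => (hK i).isClosed
  have hcpt : IsCompact (⋂ i, K i) :=
    (hK (Classical.arbitrary ι)).of_isClosed_subset hcl (Set.iInter_subset _ _)
  rw [isPreconnected_iff_subset_of_fully_disjoint_closed hcl]
  intro u v hu hv huv hdisj
  obtain ⟨U, V, hU, hV, huU, hvV, hUV⟩ := SeparatedNhds.of_isCompact_isCompact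
    (hcpt.inter_right hu) (hcpt.inter_right hv)
    (hdisj.mono Set.inter_subset_right Set.inter_subset_right)
  obtain ⟨i, hi⟩ : ∃ i, K i ⊆ U ∪ V := exists_subset_nhds_of_isCompact hdir hK fun x hx =>
    (hU.union hV).mem_nhds <| (huv hx).imp (fun h => huU ⟨hx, h⟩) (fun h => hvV ⟨hx, h⟩)
  have hsub : (⋂ i, K i) ⊆ K i := Set.iInter_subset K i
  rcases (hKc i).subset_or_subset hU hV hUV hi with hiU | hiV
  · exact Or.inl fun x hx => (huv hx).resolve_right fun hxv =>
      Set.disjoint_left.mp hUV (hiU (hsub hx)) (hvV ⟨hx, hxv⟩)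
  · exact Or.inr fun x hx => (huv hx).resolve_left fun hxu =>
      Set.disjoint_left.mp hUV (huU ⟨hx, hxu⟩) (hiV (hsub hx))

end Topology

namespace AMFC

section SingleMap

variable {d : ℕ → ℕ} {p : ℕ → ℝ} {j : ℕ}

theorem continuous_f : Continuous (f d p j) :=
  ((continuous_id.sub continuous_const).div_const _).pow _

theorem isOpenMap_f (hp : p j ≠ 0) (hd : d j ≠ 0) : IsOpenMap (f d p j) := by
  have : NeZero (d j) := ⟨hd⟩
  have hp' : (p j : ℂ)⁻¹ ≠ 0 := by exact_mod_cast inv_ne_zero hp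
  exact (Complex.isOpenQuotientMap_pow (d j)).isOpenMap.comp
    ((Homeomorph.subRight (1 - (p j : ℂ))).trans (Homeomorph.mulRight₀ _ hp')).isOpenMap

theorem subsingleton_f_preimage_zero (hp : p j ≠ 0) : (f d p j ⁻¹' {0}).Subsingleton := by
  have key : ∀ z ∈ f d p j ⁻¹' {0}, z = 1 - (p j : ℂ) := fun z hz =>
    (by simpa [f, sub_eq_zero, hp] using hz : _ ∧ _).1
  exact fun a ha b hb => (key a ha).trans (key b hb).symm

theorem norm_f (hp : 0 < p j) (z : ℂ) :
    ‖f d p j z‖ = (‖z - (1 - (p j : ℂ))‖ / p j) ^ d j := by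
  rw [f, norm_pow, norm_div, Complex.norm_real, Real.norm_of_nonneg hp.le]

theorem norm_one_sub_ofReal {t : ℝ} (ht : t ≤ 1) : ‖1 - (t : ℂ)‖ = 1 - t := by
  rw [← Complex.ofReal_one, ← Complex.ofReal_sub, Complex.norm_real,
    Real.norm_of_nonneg (sub_nonneg.mpr ht)]

/-- Since `(√2 - 1)² + 1 = √2 · 2(√2 - 1)`, the affine part of `f j` maps this disc into the disc
of radius `√2 - 1 < 1`, and the power `d j ≥ 2` lands back in the disc of radius `(√2 - 1)²`. -/
theorem mapsTo_f_closedBall (hp : p j ∈ Set.Ioc 0 1) (hρ : 2 * (√2 - 1) ≤ p j) (hd : 2 ≤ d j) :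
    Set.MapsTo (f d p j) (Metric.closedBall 0 ((√2 - 1) ^ 2))
      (Metric.closedBall 0 ((√2 - 1) ^ 2)) := by
  intro z hz
  rw [mem_closedBall_zero_iff] at hz ⊢
  have hs := Real.sq_sqrt (zero_le_two (α := ℝ))
  have hs1 : 1 ≤ √2 := Real.one_le_sqrt.mpr one_le_two
  set w := ‖z - (1 - (p j : ℂ))‖ / p j
  have hw : w ≤ √2 - 1 := by
    have := norm_sub_le z (1 - (p j : ℂ))
    rw [norm_one_sub_ofReal hp.2] at this
    rw [div_le_iff₀ hp.1]
    nlinarith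
  have hw1 : w ≤ 1 := by nlinarith
  have hw0 : 0 ≤ w := div_nonneg (norm_nonneg _) hp.1.le
  calc ‖f d p j z‖ = w ^ d j := norm_f hp.1 z
    _ ≤ w ^ 2 := pow_le_pow_of_le_one hw0 hw1 hd
    _ ≤ (√2 - 1) ^ 2 := pow_le_pow_left₀ hw0 hw 2

theorem two_mul_norm_le_norm_f (hp : p j ∈ Set.Ioc 0 1) (hd : 2 ≤ d j) {z : ℂ}
    (hz : 2 < ‖z‖) : 2 * ‖z‖ ≤ ‖f d p j z‖ := by
  set w := ‖z - (1 - (p j : ℂ))‖ / p j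
  have hw : ‖z‖ ≤ w := by
    have := norm_sub_norm_le z (1 - (p j : ℂ))
    rw [norm_one_sub_ofReal hp.2] at this
    rw [le_div_iff₀ hp.1]
    nlinarith [hp.2]
  calc 2 * ‖z‖ ≤ w ^ 2 := by nlinarith
    _ ≤ w ^ d j := pow_le_pow_right₀ (by linarith) hd
    _ = ‖f d p j z‖ := (norm_f hp.1 z).symm

theorem preimage_f_closedBall_subset (hp : p j ∈ Set.Ioc 0 1) (hd : 2 ≤ d j) :
    f d p j ⁻¹' Metric.closedBall 0 2 ⊆ Metric.closedBall 0 2 := by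
  intro z hz
  rw [Set.mem_preimage, mem_closedBall_zero_iff] at hz
  rw [mem_closedBall_zero_iff]
  by_contra! h
  linarith [two_mul_norm_le_norm_f hp hd h]

end SingleMap

structure IsTrapped (S : Set ℂ) : Prop where
  isCompact : IsCompact S
  isPreconnected : IsPreconnected S
  closedBall_subset : Metric.closedBall 0 ((√2 - 1) ^ 2) ⊆ S
  subset_closedBall : S ⊆ Metric.closedBall 0 2

theorem isTrapped_closedBall : IsTrapped (Metric.closedBall 0 2) := by
  have hs1 : 1 ≤ √2 := Real.one_le_sqrt.mpr one_le_two
  have hs2 : √2 ≤ 2 := by nlinarith [Real.sq_sqrt (zero_le_two (α := ℝ))]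
  exact ⟨isCompact_closedBall 0 2, (convex_closedBall 0 2).isPreconnected,
    Metric.closedBall_subset_closedBall (by nlinarith), subset_rfl⟩

section Pullback

variable {d : ℕ → ℕ} {p : ℕ → ℝ} {S : Set ℂ}

theorem IsTrapped.preimage_f {j : ℕ} (hS : IsTrapped S) (hp : p j ∈ Set.Ioc 0 1)
    (hρ : 2 * (√2 - 1) ≤ p j) (hd : 2 ≤ d j) : IsTrapped (f d p j ⁻¹' S) := by
  have hsub : f d p j ⁻¹' S ⊆ Metric.closedBall 0 2 :=
    (Set.preimage_mono hS.subset_closedBall).trans (preimage_f_closedBall_subset hp hd)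
  have hcpt : IsCompact (f d p j ⁻¹' S) := (isCompact_closedBall 0 2).of_isClosed_subset
    (hS.isCompact.isClosed.preimage continuous_f) hsub
  have hball := (mapsTo_f_closedBall hp hρ hd).mono_right hS.closedBall_subset
  refine ⟨hcpt, ?_, hball.subset_preimage, hsub⟩
  exact hS.isPreconnected.preimage_of_isOpenMap_of_isCompact continuous_f
    (isOpenMap_f hp.1.ne' (by omega)) hcpt
    (hS.closedBall_subset (Metric.mem_closedBall_self (sq_nonneg _)))
    (subsingleton_f_preimage_zero hp.1.ne')

theorem IsTrapped.preimage_ftil (hS : IsTrapped S) (hp : ∀ j, 1 ≤ j → p j ∈ Set.Ioc 0 1)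
    (hρ : ∀ j, 1 ≤ j → 2 * (√2 - 1) ≤ p j) (hd : ∀ j, 1 ≤ j → 2 ≤ d j) (j : ℕ) :
    IsTrapped (ftil d p j ⁻¹' S) := by
  induction j generalizing S with
  | zero => exact hS
  | succ j ih => exact ih (hS.preimage_f (hp _ j.succ_pos) (hρ _ j.succ_pos) (hd _ j.succ_pos))

end Pullback

section Escape

variable {d : ℕ → ℕ} {p : ℕ → ℝ}

theorem antitone_preimage_ftil_closedBall (hp : ∀ j, 1 ≤ j → p j ∈ Set.Ioc 0 1)
    (hd : ∀ j, 1 ≤ j → 2 ≤ d j) : Antitone fun j => ftil d p j ⁻¹' Metric.closedBall 0 2 :=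
  antitone_nat_of_succ_le fun j =>
    Set.preimage_mono (preimage_f_closedBall_subset (hp _ j.succ_pos) (hd _ j.succ_pos))

theorem tendsto_norm_ftil_atTop (hp : ∀ j, 1 ≤ j → p j ∈ Set.Ioc 0 1)
    (hd : ∀ j, 1 ≤ j → 2 ≤ d j) {z : ℂ} {j : ℕ} (hz : 2 < ‖ftil d p j z‖) :
    Tendsto (fun n => ‖ftil d p n z‖) atTop atTop := by
  have step : ∀ n, 2 < ‖ftil d p n z‖ → 2 * ‖ftil d p n z‖ ≤ ‖ftil d p (n + 1) z‖ := fun n h =>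
    two_mul_norm_le_norm_f (hp _ n.succ_pos) (hd _ n.succ_pos) h
  have large : ∀ k, 2 < ‖ftil d p (k + j) z‖ := by
    intro k
    induction k with
    | zero => simpa using hz
    | succ k ih =>
      have := step _ ih
      rw [Nat.add_right_comm] at this
      linarith
  refine (tendsto_add_atTop_iff_nat j).mp (tendsto_atTop_of_geom_le (by linarith [large 0])
    one_lt_two fun k => ?_)
  simpa only [Nat.add_right_comm] using step _ (large k)

theorem E_eq_iInter (hp : ∀ j, 1 ≤ j → p j ∈ Set.Ioc 0 1) (hd : ∀ j, 1 ≤ j → 2 ≤ d j) :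
    E d p = ⋂ j, ftil d p j ⁻¹' Metric.closedBall 0 2 := by
  ext z
  simp only [E, Set.mem_ofPred_eq, Set.mem_iInter, Set.mem_preimage, mem_closedBall_zero_iff]
  constructor
  · intro hz j
    by_contra! h
    have hinf : Tendsto (fun n => (‖ftil d p n z‖₊ : ℝ≥0∞)) atTop (𝓝 ⊤) :=
      (ENNReal.tendsto_ofReal_atTop.comp (tendsto_norm_ftil_atTop hp hd h)).congr fun n =>
        ofReal_norm _
    exact (hinf.limsup_eq ▸ hz).ne rfl
  · intro hz
    refine (limsup_le_of_le (a := 2) (by isBoundedDefault)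
      (Eventually.of_forall fun n => ?_)).trans_lt ENNReal.ofNat_lt_top
    exact_mod_cast (show ‖ftil d p n z‖₊ ≤ 2 from hz n)

end Escape

theorem stmt14_general (d : ℕ → ℕ) (p : ℕ → ℝ)
    (hd : ∀ j, 1 ≤ j → 2 ≤ d j)
    (hp : ∀ j, 1 ≤ j → p j ∈ Set.Ioc (0 : ℝ) 1)
    (hrho : ∀ i, 1 ≤ i → 2 * (Real.sqrt 2 - 1) ≤ p i) :
    IsConnected (E d p) := by
  have hK (j : ℕ) : IsTrapped (ftil d p j ⁻¹' Metric.closedBall 0 2) :=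
    isTrapped_closedBall.preimage_ftil hp hrho hd j
  rw [E_eq_iInter hp hd]
  refine ⟨⟨0, Set.mem_iInter.mpr fun j =>
    (hK j).closedBall_subset (Metric.mem_closedBall_self (sq_nonneg _))⟩, ?_⟩
  exact IsPreconnected.iInter_of_directed (antitone_preimage_ftil_closedBall hp hd).directed_ge
    (fun j => (hK j).isCompact) fun j => (hK j).isPreconnected

/-- if `p_j → 1` and `p_i ≥ 2(√2 - 1)` for all `i ≥ 1`, then `E` is
a connected subset of `ℂ`. -/
theorem stmt14 (d : ℕ → ℕ) (p : ℕ → ℝ)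
    (hd0 : d 0 = 1) (hd : ∀ j, 1 ≤ j → 2 ≤ d j)
    (hp : ∀ j, 1 ≤ j → p j ∈ Set.Ioc (0 : ℝ) 1)
    (hp1 : Filter.Tendsto (fun j => p j) Filter.atTop (nhds (1 : ℝ)))
    (hrho : ∀ i, 1 ≤ i → 2 * (Real.sqrt 2 - 1) ≤ p i) :
    IsConnected (E d p) :=
  stmt14_general d p hd hp hrho

end AMFC
end
end
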